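/- Let H be an acceptable Hintikka set and s, t closed terms of the same type. If ¬(s ≐ t) ∈ H, then (s ≠ t) ∈ H. -/
import Mathlib


namespace HintikkaHOL

/-- Simple types over base types `o` (Booleans) and `i` (individuals). -/
inductive Ty : Type
  | o : Ty
  | i : Ty
  | arr : Ty → Ty → Ty
deriving DecidableEq

open Ty

/-- Typed de Bruijn variables. -/
inductive Var : List Ty → Ty → Type
  | vz {Γ τ} : Var (τ :: Γ) τ
  | vs {Γ σ τ} : Var Γ τ → Var (σ :: Γ) τ

/-- Terms of Church's type theory over a signature `S` of parameters,
with primitive equality `eq τ : τ → τ → o` as the only logical constant. -/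
inductive Tm (S : Ty → Type) : List Ty → Ty → Type
  | var {Γ τ} : Var Γ τ → Tm S Γ τ
  | par {Γ τ} : S τ → Tm S Γ τ
  | eq {Γ} (τ : Ty) : Tm S Γ (arr τ (arr τ o))
  | app {Γ a b} : Tm S Γ (arr a b) → Tm S Γ a → Tm S Γ b
  | lam {Γ a b} : Tm S (a :: Γ) b → Tm S Γ (arr a b)

variable {S : Ty → Type}

/-- Renamings. -/
abbrev Ren (Γ Δ : List Ty) : Type := ∀ τ, Var Γ τ → Var Δ τ

def Ren.lift {Γ Δ} (r : Ren Γ Δ) (σ : Ty) : Ren (σ :: Γ) (σ :: Δ)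
  | _, .vz => .vz
  | _, .vs w => .vs (r _ w)

def rename {Γ Δ} (r : Ren Γ Δ) : ∀ {τ}, Tm S Γ τ → Tm S Δ τ
  | _, .var v => .var (r _ v)
  | _, .par p => .par p
  | _, .eq τ => .eq τ
  | _, .app f a => .app (rename r f) (rename r a)
  | _, .lam b => .lam (rename (Ren.lift r _) b)

/-- Substitutions. -/
abbrev Sub (S : Ty → Type) (Γ Δ : List Ty) : Type := ∀ τ, Var Γ τ → Tm S Δ τ

def Sub.lift {Γ Δ} (s : Sub S Γ Δ) (σ : Ty) : Sub S (σ :: Γ) (σ :: Δ)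
  | _, .vz => .var .vz
  | _, .vs w => rename (fun _ u => Var.vs u) (s _ w)

def subst {Γ Δ} (s : Sub S Γ Δ) : ∀ {τ}, Tm S Γ τ → Tm S Δ τ
  | _, .var v => s _ v
  | _, .par p => .par p
  | _, .eq τ => .eq τ
  | _, .app f a => .app (subst s f) (subst s a)
  | _, .lam b => .lam (subst (Sub.lift s _) b)

/-- The substitution sending the outermost variable to `a`. -/
def Sub.single {Γ σ} (a : Tm S Γ σ) : Sub S (σ :: Γ) Γ
  | _, .vz => a
  | _, .vs w => .var w

def subst1 {Γ σ τ} (a : Tm S Γ σ) (b : Tm S (σ :: Γ) τ) : Tm S Γ τ :=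
  subst (Sub.single a) b

/-- Weakening of a closed term into any context. -/
def Ren.fromEmpty {Γ} : Ren [] Γ := fun _ v => nomatch v

def wk0 {Γ τ} (t : Tm S [] τ) : Tm S Γ τ :=
  rename Ren.fromEmpty t

/-- The equation `s =^τ t`. -/
def eqT {Γ} (τ : Ty) (s t : Tm S Γ τ) : Tm S Γ o :=
  .app (.app (.eq τ) s) t

/-- `⊤ := (=^o) =^{ooo} (=^o)`. -/
def topT {Γ} : Tm S Γ o :=
  eqT (arr o (arr o o)) (.eq o) (.eq o)

/-- `⊥ := (λP:o. P) =^{oo} (λP:o. ⊤)`. -/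
def botT {Γ} : Tm S Γ o :=
  eqT (arr o o) (.lam (.var .vz)) (.lam topT)

/-- `¬ := λP:o. P =^o ⊥`. -/
def notC {Γ} : Tm S Γ (arr o o) :=
  .lam (eqT o (.var .vz) botT)

/-- `¬ s`. -/
def negT {Γ} (s : Tm S Γ o) : Tm S Γ o :=
  .app notC s

/-- `∧ := λP Q. (λF:ooo. F ⊤ ⊤) =^{o(ooo)} (λF. F P Q)`. -/
def andC {Γ} : Tm S Γ (arr o (arr o o)) :=
  .lam (.lam (eqT (arr (arr o (arr o o)) o)
    (.lam (.app (.app (.var .vz) topT) topT))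
    (.lam (.app (.app (.var .vz) (.var (.vs (.vs .vz)))) (.var (.vs .vz))))))

/-- `∨ := λP Q. ¬(¬P ∧ ¬Q)`. -/
def orC {Γ} : Tm S Γ (arr o (arr o o)) :=
  .lam (.lam (negT (.app (.app andC (negT (.var (.vs .vz)))) (negT (.var .vz)))))

/-- `⇒ := λP Q. ¬P ∨ Q`. -/
def impC {Γ} : Tm S Γ (arr o (arr o o)) :=
  .lam (.lam (.app (.app orC (negT (.var (.vs .vz)))) (.var .vz)))

/-- `Π^τ := λP:oτ. P =^{oτ} (λX:τ. ⊤)`. -/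
def piC {Γ} (τ : Ty) : Tm S Γ (arr (arr τ o) o) :=
  .lam (eqT (arr τ o) (.var .vz) (.lam topT))

/-- Leibniz equality `s ≐ t := Π^{oτ} (λP:oτ. (P s) ⇒ (P t))`. -/
def leibT {Γ τ} (s t : Tm S Γ τ) : Tm S Γ o :=
  .app (piC (arr τ o))
    (.lam (.app (.app impC (.app (.var .vz) (rename (fun _ v => Var.vs v) s)))
                (.app (.var .vz) (rename (fun _ v => Var.vs v) t))))

/-- βη-conversion. -/
inductive Conv : ∀ {Γ : List Ty} {τ : Ty}, Tm S Γ τ → Tm S Γ τ → Prop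
  | refl {Γ τ} (s : Tm S Γ τ) : Conv s s
  | symm {Γ τ} {s t : Tm S Γ τ} : Conv s t → Conv t s
  | trans {Γ τ} {s t u : Tm S Γ τ} : Conv s t → Conv t u → Conv s u
  | appCongr {Γ a b} {f f' : Tm S Γ (arr a b)} {s s' : Tm S Γ a} :
      Conv f f' → Conv s s' → Conv (.app f s) (.app f' s')
  | lamCongr {Γ a b} {s s' : Tm S (a :: Γ) b} :
      Conv s s' → Conv (.lam s) (.lam s')
  | beta {Γ a b} (body : Tm S (a :: Γ) b) (s : Tm S Γ a) :
      Conv (.app (.lam body) s) (subst1 s body)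
  | eta {Γ a b} (f : Tm S Γ (arr a b)) :
      Conv (.lam (.app (rename (fun _ v => Var.vs v) f) (.var .vz))) f

/-- Atomic formulas: head symbol is a parameter (or a variable). -/
inductive Atomic : ∀ {Γ : List Ty} {τ : Ty}, Tm S Γ τ → Prop
  | par {Γ τ} (p : S τ) : Atomic (Tm.par (Γ := Γ) p)
  | var {Γ τ} (v : Var Γ τ) : Atomic (Tm.var (S := S) v)
  | app {Γ a b} {f : Tm S Γ (arr a b)} {s : Tm S Γ a} : Atomic f → Atomic (.app f s)

/-- Paired spines of closed arguments, for the decomposition property `∇_d`: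
a value of `Spine2 S σ τ` is a list of pairs `(sⁱ, tⁱ)` of closed terms turning a head
of type `σ` into two applications `h s¹ … sⁿ` and `h t¹ … tⁿ` of type `τ`. -/
inductive Spine2 (S : Ty → Type) : Ty → Ty → Type
  | nil {τ} : Spine2 S τ τ
  | cons {a σ τ} (s t : Tm S [] a) (rest : Spine2 S σ τ) : Spine2 S (arr a σ) τ

def appSpineL : ∀ {σ τ}, Tm S [] σ → Spine2 S σ τ → Tm S [] τ
  | _, _, h, .nil => h
  | _, _, h, .cons s _ rest => appSpineL (.app h s) rest

def appSpineR : ∀ {σ τ}, Tm S [] σ → Spine2 S σ τ → Tm S [] τ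
  | _, _, h, .nil => h
  | _, _, h, .cons _ t rest => appSpineR (.app h t) rest

/-- `∃ i, (sⁱ ≠ tⁱ) ∈ H` for a paired spine. -/
def ExistsNeq (H : Set (Tm S [] o)) : ∀ {σ τ}, Spine2 S σ τ → Prop
  | _, _, .nil => False
  | _, _, .cons (a := a) s t rest => negT (eqT a s t) ∈ H ∨ ExistsNeq H rest

/-- Steen's acceptable Hintikka sets: sets of closed formulas (sentences) satisfying
the ten properties `∇_c, ∇_βη, ∇_=^r, ∇_=^s, ∇_b^+, ∇_b^-, ∇_f^+, ∇_f^-, ∇_m, ∇_d`. -/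
structure Acceptable (S : Ty → Type) (H : Set (Tm S [] o)) : Prop where
  nabla_c : ∀ s : Tm S [] o, ¬ (s ∈ H ∧ negT s ∈ H)
  nabla_betaEta : ∀ s t : Tm S [] o, Conv s t → s ∈ H → t ∈ H
  nabla_eq_r : ∀ {τ} (s : Tm S [] τ), negT (eqT τ s s) ∉ H
  nabla_eq_s : ∀ {τ} (u : Tm S [τ] o) (s t : Tm S [] τ),
      subst1 s u ∈ H → eqT τ s t ∈ H → subst1 t u ∈ H
  nabla_b_pos : ∀ s t : Tm S [] o, eqT o s t ∈ H →
      (s ∈ H ∧ t ∈ H) ∨ (negT s ∈ H ∧ negT t ∈ H)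
  nabla_b_neg : ∀ s t : Tm S [] o, negT (eqT o s t) ∈ H →
      (s ∈ H ∧ negT t ∈ H) ∨ (negT s ∈ H ∧ t ∈ H)
  nabla_f_pos : ∀ {a b} (f g : Tm S [] (arr a b)), eqT (arr a b) f g ∈ H →
      ∀ s : Tm S [] a, eqT b (.app f s) (.app g s) ∈ H
  nabla_f_neg : ∀ {a b} (f g : Tm S [] (arr a b)), negT (eqT (arr a b) f g) ∈ H →
      ∃ w : S a, negT (eqT b (.app f (.par w)) (.app g (.par w))) ∈ H
  nabla_m : ∀ s t : Tm S [] o, Atomic s → Atomic t → s ∈ H → negT t ∈ H →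
      negT (eqT o s t) ∈ H
  nabla_d : ∀ {σ τ} (h : Tm S [] σ) (sp : Spine2 S σ τ),
      negT (eqT τ (appSpineL h sp) (appSpineR h sp)) ∈ H → ExistsNeq H sp

/-- `H` is saturated iff `s ∈ H` or `¬s ∈ H` for every closed formula `s`. -/
def Saturated (H : Set (Tm S [] o)) : Prop :=
  ∀ s : Tm S [] o, s ∈ H ∨ negT s ∈ H

variable {S : Ty → Type} {H : Set (Tm S [] Ty.o)}

/-! ### Auxiliary metatheory -/

theorem rename_ext : ∀ {Γ Δ τ} (t : Tm S Γ τ) (r r' : Ren Γ Δ),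
    (∀ τ v, r τ v = r' τ v) → rename r t = rename r' t
  | _, _, _, .var v, r, r', h => congrArg Tm.var (h _ v)
  | _, _, _, .par _, _, _, _ => rfl
  | _, _, _, .eq _, _, _, _ => rfl
  | _, _, _, .app f a, r, r', h => by
      simp only [rename]
      exact congr (congrArg Tm.app (rename_ext f r r' h)) (rename_ext a r r' h)
  | _, _, _, .lam b, r, r', h => by
      simp only [rename]
      exact congrArg Tm.lam (rename_ext b _ _ (fun τ v => by
        cases v <;> simp [Ren.lift, h]))

theorem subst_ext : ∀ {Γ Δ τ} (t : Tm S Γ τ) (s s' : Sub S Γ Δ),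
    (∀ τ v, s τ v = s' τ v) → subst s t = subst s' t
  | _, _, _, .var v, s, s', h => h _ v
  | _, _, _, .par _, _, _, _ => rfl
  | _, _, _, .eq _, _, _, _ => rfl
  | _, _, _, .app f a, s, s', h => by
      simp only [subst]
      exact congr (congrArg Tm.app (subst_ext f s s' h)) (subst_ext a s s' h)
  | _, _, _, .lam b, s, s', h => by
      simp only [subst]
      exact congrArg Tm.lam (subst_ext b _ _ (fun τ v => by
        cases v <;> simp [Sub.lift, h]))

theorem rename_rename : ∀ {Γ Δ Ε τ} (t : Tm S Γ τ) (r : Ren Γ Δ) (q : Ren Δ Ε),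
    rename q (rename r t) = rename (fun τ v => q τ (r τ v)) t
  | _, _, _, _, .var v, _, _ => rfl
  | _, _, _, _, .par _, _, _ => rfl
  | _, _, _, _, .eq _, _, _ => rfl
  | _, _, _, _, .app f a, r, q => by
      simp only [rename]
      exact congr (congrArg Tm.app (rename_rename f r q)) (rename_rename a r q)
  | _, _, _, _, .lam b, r, q => by
      simp only [rename]
      refine congrArg Tm.lam ((rename_rename b _ _).trans ?_)
      exact rename_ext b _ _ (fun τ v => by cases v <;> simp [Ren.lift])

theorem subst_rename : ∀ {Γ Δ Ε τ} (t : Tm S Γ τ) (r : Ren Γ Δ) (s : Sub S Δ Ε),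
    subst s (rename r t) = subst (fun τ v => s τ (r τ v)) t
  | _, _, _, _, .var v, _, _ => rfl
  | _, _, _, _, .par _, _, _ => rfl
  | _, _, _, _, .eq _, _, _ => rfl
  | _, _, _, _, .app f a, r, s => by
      simp only [subst, rename]
      exact congr (congrArg Tm.app (subst_rename f r s)) (subst_rename a r s)
  | _, _, _, _, .lam b, r, s => by
      simp only [subst, rename]
      refine congrArg Tm.lam ((subst_rename b _ _).trans ?_)
      exact subst_ext b _ _ (fun τ v => by cases v <;> simp [Ren.lift, Sub.lift])

theorem subst_var : ∀ {Γ Δ τ} (t : Tm S Γ τ) (s : Sub S Γ Δ) (r : Ren Γ Δ),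
    (∀ τ v, s τ v = .var (r τ v)) → subst s t = rename r t
  | _, _, _, .var v, _, _, h => h _ v
  | _, _, _, .par _, _, _, _ => rfl
  | _, _, _, .eq _, _, _, _ => rfl
  | _, _, _, .app f a, s, r, h => by
      simp only [subst, rename]
      exact congr (congrArg Tm.app (subst_var f s r h)) (subst_var a s r h)
  | _, _, _, .lam b, s, r, h => by
      simp only [subst, rename]
      exact congrArg Tm.lam (subst_var b _ _ (fun τ v => by
        cases v <;> simp [Ren.lift, Sub.lift, h, rename]))

theorem rename_id : ∀ {Γ τ} (t : Tm S Γ τ) (r : Ren Γ Γ),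
    (∀ τ v, r τ v = v) → rename r t = t
  | _, _, .var v, _, h => congrArg Tm.var (h _ v)
  | _, _, .par _, _, _ => rfl
  | _, _, .eq _, _, _ => rfl
  | _, _, .app f a, r, h => by
      simp only [rename]
      exact congr (congrArg Tm.app (rename_id f r h)) (rename_id a r h)
  | _, _, .lam b, r, h => by
      simp only [rename]
      exact congrArg Tm.lam (rename_id b _ (fun τ v => by
        cases v <;> simp [Ren.lift, h]))

@[simp] theorem ren0 {Γ τ} (r : Ren [] Γ) (t : Tm S [] τ) : rename r t = wk0 t :=
  rename_ext t r Ren.fromEmpty (fun _ v => nomatch v)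

@[simp] theorem sub0 {Γ τ} (s : Sub S [] Γ) (t : Tm S [] τ) : subst s t = wk0 t :=
  subst_var t s Ren.fromEmpty (fun _ v => nomatch v)

@[simp] theorem wk0_nil {τ} (t : Tm S [] τ) : wk0 (Γ := []) t = t :=
  rename_id t _ (fun _ v => nomatch v)

@[simp] theorem rename_wk0 {Γ Δ τ} (r : Ren Γ Δ) (t : Tm S [] τ) :
    rename r (wk0 t) = wk0 t := by
  rw [wk0, rename_rename]; exact ren0 _ t

@[simp] theorem subst_wk0 {Γ Δ τ} (s : Sub S Γ Δ) (t : Tm S [] τ) :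
    subst s (wk0 t) = wk0 t := by
  rw [wk0, subst_rename]; exact sub0 _ t


@[simp] theorem wk0_app {Γ a b} (f : Tm S [] (arr a b)) (x : Tm S [] a) :
    wk0 (Γ := Γ) (.app f x) = .app (wk0 f) (wk0 x) := rfl

@[simp] theorem wk0_par {Γ τ} (p : S τ) : wk0 (Γ := Γ) (.par p) = .par p := rfl

@[simp] theorem wk0_eq {Γ τ} : wk0 (Γ := Γ) (.eq (S := S) τ) = .eq τ := rfl

@[simp] theorem wk0_lam {Γ a b} (b' : Tm S [a] b) :
    wk0 (Γ := Γ) (.lam b') = .lam (rename (Ren.lift Ren.fromEmpty a) b') := rfl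

/-! ### Derived logical facts in acceptable Hintikka sets -/

theorem memConv (hH : Acceptable S H) {s t : Tm S [] o} (c : Conv s t) (hs : s ∈ H) :
    t ∈ H := hH.nabla_betaEta s t c hs

theorem conv_negT {Γ} {s t : Tm S Γ o} (c : Conv s t) : Conv (negT s) (negT t) :=
  Conv.appCongr (Conv.refl _) c

theorem conv_eqT {Γ τ} {s s' t t' : Tm S Γ τ} (cs : Conv s s') (ct : Conv t t') :
    Conv (eqT τ s t) (eqT τ s' t') :=
  Conv.appCongr (Conv.appCongr (Conv.refl _) cs) ct

theorem notBeta {Γ} (X : Tm S Γ o) : Conv (negT X) (eqT o X botT) := Conv.beta _ X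

theorem bot_not_mem (hH : Acceptable S H) : (botT : Tm S [] o) ∉ H := by
  intro hb
  have h1 := hH.nabla_f_pos (.lam (.var .vz)) (.lam topT) hb (negT topT)
  have c1 : Conv (eqT o (.app (.lam (.var .vz)) (negT topT)) (.app (.lam topT) (negT topT)))
      (eqT o (negT (topT : Tm S [] o)) topT) :=
    conv_eqT (Conv.beta _ _) (Conv.beta _ _)
  rcases hH.nabla_b_pos _ _ (memConv hH c1 h1) with ⟨hnt, _⟩ | ⟨_, hnt⟩ <;>
    exact absurd hnt (hH.nabla_eq_r (Tm.eq o))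

theorem dne (hH : Acceptable S H) {X : Tm S [] o} (h : negT (negT X) ∈ H) : X ∈ H := by
  have h2 := memConv hH (conv_negT (notBeta X)) h
  rcases hH.nabla_b_neg _ _ h2 with ⟨hX, _⟩ | ⟨_, hb⟩
  · exact hX
  · exact absurd hb (bot_not_mem hH)

theorem convK1 (P Q : Tm S [] o) :
    Conv (.app (.app (.lam (.lam (.var (.vs .vz)))) P) Q) P := by
  refine Conv.trans (Conv.appCongr (Conv.beta (.lam (.var (.vs .vz))) P) (Conv.refl Q)) ?_
  rw [show (subst1 P (.lam (.var (.vs .vz))) : Tm S [] (arr o o)) = .lam (wk0 P) from by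
    simp [subst1, subst, Sub.lift, Sub.single]]
  refine Conv.trans (Conv.beta (wk0 P) Q) ?_
  rw [show (subst1 Q (wk0 P) : Tm S [] o) = P from by simp [subst1]]
  exact Conv.refl P

theorem convK2 (P Q : Tm S [] o) :
    Conv (.app (.app (.lam (.lam (.var .vz))) P) Q) Q :=
  Conv.trans (Conv.appCongr (Conv.beta _ P) (Conv.refl Q)) (Conv.beta _ Q)

theorem and_elim (hH : Acceptable S H) (P Q : Tm S [] o)
    (h : .app (.app andC P) Q ∈ H) : P ∈ H ∧ Q ∈ H := by
  have c0 : Conv (.app (.app (andC (Γ := [])) P) Q)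
      (eqT (arr (arr o (arr o o)) o) (.lam (.app (.app (.var .vz) topT) topT))
        (.lam (.app (.app (.var .vz) (wk0 P)) (wk0 Q)))) := by
    refine Conv.trans (Conv.appCongr (Conv.beta _ P) (Conv.refl Q)) ?_
    rw [show (subst1 P (.lam (eqT (arr (arr o (arr o o)) o)
          (.lam (.app (.app (.var .vz) topT) topT))
          (.lam (.app (.app (.var .vz) (.var (.vs (.vs .vz)))) (.var (.vs .vz)))))) : Tm S [] (arr o o))
        = .lam (eqT (arr (arr o (arr o o)) o) (.lam (.app (.app (.var .vz) topT) topT))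
            (.lam (.app (.app (.var .vz) (wk0 P)) (.var (.vs .vz))))) from by
      simp [subst1, subst, Sub.lift, Sub.single, eqT, topT, rename, Ren.lift]]
    refine Conv.trans (Conv.beta _ Q) ?_
    rw [show (subst1 Q (eqT (arr (arr o (arr o o)) o) (.lam (.app (.app (.var .vz) topT) topT))
            (.lam (.app (.app (.var .vz) (wk0 P)) (.var (.vs .vz)))))) =
        eqT (arr (arr o (arr o o)) o) (.lam (.app (.app (.var .vz) topT) topT))
            (.lam (.app (.app (.var .vz) (wk0 P)) (wk0 Q))) from by
      simp [subst1, subst, Sub.lift, Sub.single, eqT, topT, rename, Ren.lift]]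
    exact Conv.refl _
  have hFG := memConv hH c0 h
  constructor
  · have h1 := hH.nabla_f_pos _ _ hFG (.lam (.lam (.var (.vs .vz))))
    have cF : Conv (.app (.lam (.app (.app (.var .vz) topT) topT))
        (.lam (.lam (.var (.vs .vz))) : Tm S [] (arr o (arr o o)))) topT :=
      Conv.trans (Conv.beta _ _) (convK1 topT topT)
    have cG : Conv (.app (.lam (.app (.app (.var .vz) (wk0 P)) (wk0 Q)))
        (.lam (.lam (.var (.vs .vz))) : Tm S [] (arr o (arr o o)))) P := by
      refine Conv.trans (Conv.beta _ _) ?_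
      rw [show (subst1 (.lam (.lam (.var (.vs .vz))) : Tm S [] (arr o (arr o o)))
            (.app (.app (.var .vz) (wk0 P)) (wk0 Q)) : Tm S [] o)
          = .app (.app (.lam (.lam (.var (.vs .vz)))) P) Q from by
        simp [subst1, subst, Sub.single]]
      exact convK1 P Q
    rcases hH.nabla_b_pos _ _ (memConv hH (conv_eqT cF cG) h1) with ⟨_, hp⟩ | ⟨hnt, _⟩
    · exact hp
    · exact absurd hnt (hH.nabla_eq_r (Tm.eq o))
  · have h1 := hH.nabla_f_pos _ _ hFG (.lam (.lam (.var .vz)))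
    have cF : Conv (.app (.lam (.app (.app (.var .vz) topT) topT))
        (.lam (.lam (.var .vz)) : Tm S [] (arr o (arr o o)))) topT :=
      Conv.trans (Conv.beta _ _) (convK2 topT topT)
    have cG : Conv (.app (.lam (.app (.app (.var .vz) (wk0 P)) (wk0 Q)))
        (.lam (.lam (.var .vz)) : Tm S [] (arr o (arr o o)))) Q := by
      refine Conv.trans (Conv.beta _ _) ?_
      rw [show (subst1 (.lam (.lam (.var .vz)) : Tm S [] (arr o (arr o o)))
            (.app (.app (.var .vz) (wk0 P)) (wk0 Q)) : Tm S [] o)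
          = .app (.app (.lam (.lam (.var .vz))) P) Q from by
        simp [subst1, subst, Sub.single]]
      exact convK2 P Q
    rcases hH.nabla_b_pos _ _ (memConv hH (conv_eqT cF cG) h1) with ⟨_, hq⟩ | ⟨hnt, _⟩
    · exact hq
    · exact absurd hnt (hH.nabla_eq_r (Tm.eq o))

theorem conv_imp (A B : Tm S [] o) :
    Conv (.app (.app impC A) B)
      (negT (.app (.app andC (negT (negT A))) (negT B))) := by
  refine Conv.trans (Conv.appCongr (Conv.beta _ A) (Conv.refl B)) ?_
  rw [show (subst1 A (.lam (.app (.app orC (negT (.var (.vs .vz)))) (.var .vz))) : Tm S [] (arr o o))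
      = .lam (.app (.app orC (negT (wk0 A))) (.var .vz)) from by
    simp [subst1, subst, Sub.lift, Sub.single, negT, notC, botT, topT, eqT, orC, andC, rename, Ren.lift]]
  refine Conv.trans (Conv.beta _ B) ?_
  rw [show (subst1 B (.app (.app orC (negT (wk0 A))) (.var .vz)) : Tm S [] o)
      = .app (.app orC (negT A)) B from by
    simp [subst1, subst, Sub.lift, Sub.single, negT, notC, botT, topT, eqT, orC, andC, rename, Ren.lift]]
  refine Conv.trans (Conv.appCongr (Conv.beta _ (negT A)) (Conv.refl B)) ?_
  rw [show (subst1 (negT A) (.lam (negT (.app (.app andC (negT (.var (.vs .vz)))) (negT (.var .vz))))) : Tm S [] (arr o o))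
      = .lam (negT (.app (.app andC (negT (wk0 (negT A)))) (negT (.var .vz)))) from by
    simp [subst1, subst, Sub.lift, Sub.single, negT, notC, botT, topT, eqT, orC, andC, rename, Ren.lift]]
  refine Conv.trans (Conv.beta _ B) ?_
  rw [show (subst1 B (negT (.app (.app andC (negT (wk0 (negT A)))) (negT (.var .vz)))) : Tm S [] o)
      = negT (.app (.app andC (negT (negT A))) (negT B)) from by
    simp [subst1, subst, Sub.lift, Sub.single, negT, notC, botT, topT, eqT, orC, andC, rename, Ren.lift]]
  exact Conv.refl _

/-- If `¬(s ≐ t) ∈ H`, then `(s ≠ t) ∈ H`. -/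
theorem neg_leib_to_neq_mem (hH : Acceptable S H) {τ : Ty} (s t : Tm S [] τ)
    (h : negT (leibT s t) ∈ H) : negT (eqT τ s t) ∈ H := by
  simp only [leibT, ren0] at h
  -- Step A: unfold the Π quantifier
  have hM : negT (eqT (arr (arr τ o) o)
      (.lam (.app (.app impC (.app (.var .vz) (wk0 s))) (.app (.var .vz) (wk0 t))))
      (.lam topT)) ∈ H :=
    memConv hH (conv_negT (Conv.beta
      (eqT (arr (arr τ o) o) (.var .vz) (.lam topT))
      (.lam (.app (.app impC (.app (.var .vz) (wk0 s))) (.app (.var .vz) (wk0 t)))))) h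
  -- Step B: functional extensionality (negative)
  obtain ⟨w, h2⟩ := hH.nabla_f_neg _ _ hM
  -- Step C: beta-reduce the witness instance
  have cD : Conv (.app (.lam (.app (.app impC (.app (.var .vz) (wk0 s)))
        (.app (.var .vz) (wk0 t)))) (.par w))
      (.app (.app impC (.app (.par w) s)) (.app (.par w) t)) := by
    rw [show (.app (.app impC (.app (.par w) s)) (.app (.par w) t) : Tm S [] o)
        = subst1 (.par w) (.app (.app impC (.app (.var .vz) (wk0 s)))
            (.app (.var .vz) (wk0 t))) from by
      simp [subst1, subst, Sub.lift, Sub.single, impC, orC, andC, negT, notC, botT, topT,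
        eqT, rename, Ren.lift]]
    exact Conv.beta _ _
  have h3 : negT (eqT o (.app (.app impC (.app (.par w) s)) (.app (.par w) t)) topT) ∈ H :=
    memConv hH (conv_negT (conv_eqT cD (Conv.beta topT (.par w)))) h2
  -- Step D: boolean extensionality (negative)
  rcases hH.nabla_b_neg _ _ h3 with ⟨h4, hnt⟩ | ⟨h4, _⟩
  · exact absurd hnt (hH.nabla_eq_r (Tm.eq o))
  -- Step E-F: unfold the implication and eliminate the double negations
  have h5 : .app (.app andC (negT (negT (.app (.par w) s)))) (negT (.app (.par w) t)) ∈ H :=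
    dne hH (memConv hH (conv_negT (conv_imp _ _)) h4)
  obtain ⟨hnnA, hnB⟩ := and_elim hH _ _ h5
  have hA : .app (.par w) s ∈ H := dne hH hnnA
  -- Step H: mating
  have hm := hH.nabla_m _ _ (Atomic.app (Atomic.par w)) (Atomic.app (Atomic.par w)) hA hnB
  -- Step I: decomposition
  have hd : negT (eqT τ s t) ∈ H ∨ False :=
    hH.nabla_d (.par w) (Spine2.cons s t .nil) hm
  exact hd.resolve_right False.elim

end HintikkaHOL
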